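/- arXiv:1709.05163 — 3 statements merged into one kernel-verified Lean document; each statement's English description precedes it below -/
import Mathlib

section
/- Let e1, e2 ∈ {0, 1, …, N−1} with e1 < e2, and suppose e1 + e2 ≢ 1 (mod N) and e1 + e2 ≢ 1 − N/2 (mod N). For every odd shift τ = 2τ0 + 1 with 0 ≤ τ0 ≤ N−1, the periodic cross-correlation of S^{e1} and S^{e2} satisfies: R_{S^{e1},S^{e2}}(2τ0+1) = −N − N2 if τ0 ≡ −e2 − N/2 or τ0 ≡ e1 − 1 + N/2 (mod N); R_{S^{e1},S^{e2}}(2τ0+1) = −N1 − N2 if τ0 ≡ −e2 or τ0 ≡ e1 − 1 (mod N); and R_{S^{e1},S^{e2}}(2τ0+1) = −2N2 otherwise. -/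
/-!
Splitting the sum over `i < 2N` into even and odd `i` gives
`R_{S^{e₁},S^{e₂}}(2τ₀+1) = R_{T¹,T²}(τ₀+e₂) + R_{T¹,T²}(e₁-1-τ₀)`.
With `η` the quadratic character of `𝔽_p`, `(-1)^{t¹ₙ} = η(Tr ωⁿ) + [Tr ωⁿ = 0]` and
`(-1)^{t²ₙ} = η(Tr ωⁿ) - [Tr ωⁿ = 0]`. As `ω^{N/2}` is a nonsquare of `𝔽_p`, both sequences are
`N`-periodic and `(p-1)/2 · R_{T¹,T²}(d)` is the sum of such products at `x` and `ω^d x` over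
`x ∈ 𝔽_{p^m}ˣ`. The maps `x ↦ Tr x` and, when `ω^d ∉ 𝔽_p`, `x ↦ (Tr x, Tr(ω^d x))` are surjective
and linear, so all their fibres have the same size; this evaluates `R_{T¹,T²}(d)` as `-N₁`, `-N`
or `-N₂` according as `d ≡ 0`, `d ≡ N/2` or neither modulo `N`. The two shifts add up to
`e₁ + e₂ - 1`, so the hypotheses say that at most one of them is `≡ 0` or `≡ N/2`.
-/

/-- The geometric sequence of the first type: `t¹ₙ = 1` iff the Legendre symbol of
`Tr(ω^n)` is `-1`, and `0` otherwise (i.e. when the symbol is `0` or `1`). -/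
noncomputable def ntuT1 (p : ℕ) [Fact p.Prime] {F : Type} [Field F]
    [Algebra (ZMod p) F] (ω : F) (n : ℕ) : ZMod 2 :=
  if legendreSym p ((Algebra.trace (ZMod p) F (ω ^ n)).val : ℤ) = -1 then 1 else 0

/-- The geometric sequence of the second type: `t²ₙ = 0` iff the Legendre symbol of
`Tr(ω^n)` is `1`, and `1` otherwise (i.e. when the symbol is `0` or `-1`). -/
noncomputable def ntuT2 (p : ℕ) [Fact p.Prime] {F : Type} [Field F]
    [Algebra (ZMod p) F] (ω : F) (n : ℕ) : ZMod 2 :=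
  if legendreSym p ((Algebra.trace (ZMod p) F (ω ^ n)).val : ℤ) = 1 then 0 else 1

/-- Periodic cross-correlation at shift `τ` of two `N`-periodic binary sequences:
`R_{s,s'}(τ) = Σ_{i=0}^{N-1} (-1)^{s_i + s'_{i+τ}}`, indices taken modulo `N`. -/
def pcorr (N : ℕ) (s s' : ℕ → ZMod 2) (τ : ℤ) : ℤ :=
  ∑ i ∈ Finset.range N, (-1 : ℤ) ^ ((s i + s' ((((i : ℤ) + τ) % (N : ℤ)).toNat)).val)

/-- The interleaved sequence of `t` and the left shift by `e` of `u`: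
`n = 2j ↦ t j`, `n = 2j+1 ↦ u (j + e)`. -/
def ntuInterleave (t u : ℕ → ZMod 2) (e : ℕ) (n : ℕ) : ZMod 2 :=
  if n % 2 = 0 then t (n / 2) else u (n / 2 + e)

open Finset Function

namespace Function.Periodic

variable {M : Type*} [AddCancelCommMonoid M] {N : ℕ} {g : ℕ → M}

theorem sum_range_add (hg : Periodic g N) (c : ℕ) :
    ∑ j ∈ range N, g (j + c) = ∑ j ∈ range N, g j := by
  induction c with
  | zero => rfl
  | succ c ih =>
    have h := (sum_range_succ' (fun j => g (j + c)) N).symm.trans (sum_range_succ _ N)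
    rw [zero_add, add_comm N c, hg c] at h
    simpa only [← add_assoc, add_right_comm _ 1 c, ih] using add_right_cancel h

theorem sum_range_mul (hg : Periodic g N) (k : ℕ) :
    ∑ j ∈ range (k * N), g j = k • ∑ j ∈ range N, g j := by
  induction k with
  | zero => simp
  | succ k ih =>
    rw [add_mul, one_mul, Finset.sum_range_add, ih, succ_nsmul]
    exact congrArg _ (sum_congr rfl fun j _ => by
      rw [add_comm]; simpa using hg.nat_mul k j)

theorem apply_toNat_emod {α : Type*} {f : ℕ → α} (hf : Periodic f N) {n : ℕ} {x : ℤ}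
    (h : (n : ℤ) ≡ x [ZMOD N]) : f (x % N).toNat = f n := by
  rcases N.eq_zero_or_pos with rfl | hN
  · simp only [Int.ModEq, Nat.cast_zero, Int.emod_zero] at h ⊢
    simp [← h]
  rw [← hf.map_mod_nat, ← hf.map_mod_nat n]
  congr 1
  zify [Int.emod_nonneg x (by omega : (N : ℤ) ≠ 0)]
  rw [Int.toNat_of_nonneg (Int.emod_nonneg x (by omega)), Int.emod_emod_of_dvd _ dvd_rfl]
  exact h.symm

end Function.Periodic

theorem Finset.sum_range_two_mul {M : Type*} [AddCommMonoid M] (f : ℕ → M) (n : ℕ) :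
    ∑ i ∈ range (2 * n), f i = ∑ j ∈ range n, f (2 * j) + ∑ j ∈ range n, f (2 * j + 1) := by
  induction n with
  | zero => simp
  | succ n ih =>
    simp only [mul_add, mul_one, ih, sum_range_succ]
    abel

section Correlation

variable {N : ℕ} {s s' : ℕ → ZMod 2}

theorem pcorr_eq_sum_add (hs : Periodic s N) (τ : ℤ) (c : ℕ) :
    pcorr N s s' τ = ∑ j ∈ range N,
      (-1 : ℤ) ^ (s (j + c) + s' ((((j + c : ℕ) : ℤ) + τ) % N).toNat).val := by
  have hG : Periodic (fun k => (-1 : ℤ) ^ (s k + s' ((((k : ℕ) : ℤ) + τ) % N).toNat).val) N := by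
    intro k
    simp only [hs k, Nat.cast_add, add_right_comm _ (N : ℤ), Int.add_emod_right]
  exact (hG.sum_range_add c).symm

theorem pcorr_eq_sum_of_modEq (hs' : Periodic s' N) {τ : ℤ} {d : ℕ}
    (h : (d : ℤ) ≡ τ [ZMOD N]) :
    pcorr N s s' τ = ∑ j ∈ range N, (-1 : ℤ) ^ (s j + s' (j + d)).val :=
  sum_congr rfl fun j _ => by
    rw [hs'.apply_toNat_emod (n := j + d) (by push_cast; exact h.add_left j)]

end Correlation

section Interleave

variable {t u : ℕ → ZMod 2} {N e : ℕ}

@[simp]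
theorem ntuInterleave_two_mul (j : ℕ) : ntuInterleave t u e (2 * j) = t j := by
  simp [ntuInterleave]

@[simp]
theorem ntuInterleave_two_mul_add_one (j : ℕ) :
    ntuInterleave t u e (2 * j + 1) = u (j + e) := by
  simp only [ntuInterleave, Nat.mul_add_mod_self_left, Nat.one_mod, one_ne_zero, if_false]
  congr 2
  omega

theorem ntuInterleave_toNat_emod_two_mul (ht : Periodic t N) (hN : 0 < N) (x : ℤ) :
    ntuInterleave t u e ((2 * x) % ((2 * N : ℕ) : ℤ)).toNat = t (x % N).toNat := by
  set k := ((2 * x) % ((2 * N : ℕ) : ℤ)).toNat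
  have hk : (k : ℤ) = (2 * x) % ((2 * N : ℕ) : ℤ) :=
    Int.toNat_of_nonneg (Int.emod_nonneg _ (by omega))
  obtain ⟨c, hc⟩ := (Int.mod_modEq (2 * x) ((2 * N : ℕ) : ℤ)).dvd
  have hk2 : k % 2 = 0 ∧ ((k / 2 : ℕ) : ℤ) = x - N * c := by
    have h : (k : ℤ) = 2 * x - 2 * (N * c) := by
      push_cast at hk hc; linear_combination hk - hc
    generalize (N : ℤ) * c = m at h ⊢
    omega
  rw [ntuInterleave, if_pos hk2.1, ht.apply_toNat_emod]
  exact Int.modEq_iff_dvd.mpr ⟨c, by linear_combination -hk2.2⟩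

theorem ntuInterleave_toNat_emod_two_mul_add_one (hu : Periodic u N) (hN : 0 < N) (x : ℤ) :
    ntuInterleave t u e ((2 * x + 1) % ((2 * N : ℕ) : ℤ)).toNat = u ((x + e) % N).toNat := by
  set k := ((2 * x + 1) % ((2 * N : ℕ) : ℤ)).toNat
  have hk : (k : ℤ) = (2 * x + 1) % ((2 * N : ℕ) : ℤ) :=
    Int.toNat_of_nonneg (Int.emod_nonneg _ (by omega))
  obtain ⟨c, hc⟩ := (Int.mod_modEq (2 * x + 1) ((2 * N : ℕ) : ℤ)).dvd
  have hk2 : k % 2 = 1 ∧ ((k / 2 : ℕ) : ℤ) = x - N * c := by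
    have h : (k : ℤ) = 2 * x + 1 - 2 * (N * c) := by
      push_cast at hk hc; linear_combination hk - hc
    generalize (N : ℤ) * c = m at h ⊢
    omega
  rw [ntuInterleave, if_neg (by omega), hu.apply_toNat_emod]
  exact Int.modEq_iff_dvd.mpr ⟨c, by rw [Nat.cast_add]; linear_combination -hk2.2⟩

theorem pcorr_ntuInterleave_two_mul_add_one (ht : Periodic t N) (hu : Periodic u N)
    (e₁ e₂ : ℕ) (τ : ℤ) :
    pcorr (2 * N) (ntuInterleave t u e₁) (ntuInterleave t u e₂) (2 * τ + 1) =
      pcorr N t u (τ + e₂) + pcorr N t u (e₁ - 1 - τ) := by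
  rcases N.eq_zero_or_pos with rfl | hN
  · simp [pcorr]
  rw [pcorr, sum_range_two_mul]
  congr 1
  · refine sum_congr rfl fun j _ => ?_
    rw [show ((2 * j : ℕ) : ℤ) + (2 * τ + 1) = 2 * (j + τ) + 1 by push_cast; ring,
      ntuInterleave_toNat_emod_two_mul_add_one hu hN, ntuInterleave_two_mul, add_assoc]
  · set c := ((τ + 1) % N).toNat
    have hc : (c : ℤ) ≡ τ + 1 [ZMOD N] := by
      rw [Int.toNat_of_nonneg (Int.emod_nonneg _ (by omega))]
      exact Int.mod_modEq _ _
    rw [pcorr_eq_sum_add ht _ c]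
    refine sum_congr rfl fun j _ => ?_
    rw [show ((2 * j + 1 : ℕ) : ℤ) + (2 * τ + 1) = 2 * (j + τ + 1) by push_cast; ring,
      ntuInterleave_toNat_emod_two_mul ht hN, ntuInterleave_two_mul_add_one, add_comm,
      ht.apply_toNat_emod (n := j + c) (by push_cast; rw [add_assoc]; exact hc.add_left j),
      hu.apply_toNat_emod (n := j + e₁)]
    rw [show ((j + e₁ : ℕ) : ℤ) = j + (τ + 1) + (e₁ - 1 - τ) by push_cast; ring]
    push_cast
    exact (hc.symm.add_left j).add_right _

end Interleave

theorem AddMonoidHom.card_nsmul_sum_comp_of_surjective {G H M : Type*} [AddGroup G] [Fintype G]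
    [AddGroup H] [Fintype H] [AddCommMonoid M] (L : G →+ H) (hL : Surjective L) (f : H → M) :
    Fintype.card H • ∑ g, f (L g) = Fintype.card G • ∑ h, f h := by
  classical
  have hfib (h : H) : #{g | L g = h} = #{g | L g = 0} :=
    AddMonoidHom.card_fiber_eq_of_mem_range L (hL h) (hL 0)
  have hcard : Fintype.card G = Fintype.card H * #{g | L g = 0} := by
    rw [← card_univ, card_eq_sum_card_fiberwise (f := L) (t := univ) fun _ _ => mem_univ _]
    simp [hfib]
  rw [sum_comp, image_univ_of_surjective hL]
  simp_rw [hfib, ← smul_sum, hcard, mul_smul]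

section TraceSums

variable {K F M : Type*} [Field K] [Fintype K] [Field F] [Fintype F] [Algebra K F]
  [AddCommMonoid M]

theorem card_nsmul_sum_comp_trace (f : K → M) :
    Fintype.card K • ∑ x : F, f (Algebra.trace K F x) = Fintype.card F • ∑ a, f a :=
  (Algebra.trace K F).toAddMonoidHom.card_nsmul_sum_comp_of_surjective
    (Algebra.trace_surjective K F) f

theorem surjective_trace_prod_trace_mulLeft {y : F} (hy : y ∉ Set.range (algebraMap K F)) :
    Surjective ((Algebra.trace K F).prod ((Algebra.trace K F).comp (LinearMap.mulLeft K y))) := by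
  -- a functional `(a, b) ↦ α a + β b` killing the image gives `Tr ((α + β y) x) = 0` for all `x`
  rw [← LinearMap.dualMap_injective_iff, injective_iff_map_eq_zero]
  intro φ hφ
  have hφ' (x : F) :
      Algebra.trace K F ((algebraMap K F (φ (1, 0)) + algebraMap K F (φ (0, 1)) * y) * x) = 0 := by
    have h := LinearMap.congr_fun hφ x
    have hsplit (a b : K) : φ (a, b) = a * φ (1, 0) + b * φ (0, 1) := by
      rw [← smul_eq_mul, ← smul_eq_mul, ← map_smul, ← map_smul, ← map_add]
      simp
    simp only [LinearMap.dualMap_apply, LinearMap.prod_apply, LinearMap.zero_apply] at h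
    rw [hsplit] at h
    rw [add_mul, map_add, mul_assoc, ← Algebra.smul_def, ← Algebra.smul_def, map_smul, map_smul]
    simpa [mul_comm] using h
  have h0 := (traceForm_nondegenerate K F).1 _ fun x => by
    simpa only [Algebra.traceForm_apply] using hφ' x
  have hβ : φ (0, 1) = 0 := by
    by_contra hβ
    refine hy ⟨-φ (1, 0) / φ (0, 1), ?_⟩
    rw [map_div₀, map_neg, div_eq_iff ((map_ne_zero _).2 hβ), neg_eq_iff_add_eq_zero, mul_comm]
    exact h0
  have hα : φ (1, 0) = 0 := by
    simpa [hβ] using h0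
  ext <;> simp [hα, hβ]

theorem card_sq_nsmul_sum_comp_trace_trace_mul {y : F} (hy : y ∉ Set.range (algebraMap K F))
    (f : K → K → M) :
    Fintype.card K ^ 2 • ∑ x : F, f (Algebra.trace K F x) (Algebra.trace K F (y * x)) =
      Fintype.card F • ∑ a, ∑ b, f a b := by
  have h := ((Algebra.trace K F).prod ((Algebra.trace K F).comp
    (LinearMap.mulLeft K y))).toAddMonoidHom.card_nsmul_sum_comp_of_surjective
    (surjective_trace_prod_trace_mulLeft hy) fun v => f v.1 v.2
  rwa [Fintype.card_prod, ← sq, Fintype.sum_prod_type] at h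

end TraceSums

theorem ZMod.neg_one_pow_val_add (a b : ZMod 2) :
    (-1 : ℤ) ^ (a + b).val = (-1) ^ a.val * (-1) ^ b.val := by
  revert a b
  decide

theorem ne_zero_of_orderOf_eq_card_sub_one {F : Type*} [Field F] [Fintype F] {ω : F}
    (hω : orderOf ω = Fintype.card F - 1) : ω ≠ 0 := by
  rintro rfl
  have := Fintype.one_lt_card (α := F)
  rw [orderOf_zero] at hω
  omega

theorem sum_range_pow_add_apply_zero {F M : Type*} [Field F] [Fintype F] [AddCommMonoid M]
    {ω : F} (hω : orderOf ω = Fintype.card F - 1) (G : F → M) :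
    ∑ j ∈ range (Fintype.card F - 1), G (ω ^ j) + G 0 = ∑ x, G x := by
  classical
  have hω0 := ne_zero_of_orderOf_eq_card_sub_one hω
  have hinj : Set.InjOn (ω ^ ·) (range (Fintype.card F - 1)) := by
    rw [coe_range, ← hω]
    exact pow_injOn_Iio_orderOf
  have himage : (range (Fintype.card F - 1)).image (ω ^ ·) = univ.erase 0 := by
    refine eq_of_subset_of_card_le (fun x hx => ?_) ?_
    · obtain ⟨j, -, rfl⟩ := mem_image.1 hx
      exact mem_erase.2 ⟨pow_ne_zero j hω0, mem_univ _⟩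
    · rw [card_image_of_injOn hinj, card_range, card_erase_of_mem (mem_univ _), card_univ]
  rw [← sum_image hinj, himage, sum_erase_add _ _ (mem_univ 0)]

section Signs

variable (p : ℕ) [Fact p.Prime]

def ntuSign1 (a : ZMod p) : ℤ := quadraticChar (ZMod p) a + if a = 0 then 1 else 0

def ntuSign2 (a : ZMod p) : ℤ := quadraticChar (ZMod p) a - if a = 0 then 1 else 0

variable {p}

theorem legendreSym_val (a : ZMod p) : legendreSym p a.val = quadraticChar (ZMod p) a := by
  simp [legendreSym]

variable {F : Type} [Field F] [Algebra (ZMod p) F]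

theorem neg_one_pow_ntuT1 (ω : F) (n : ℕ) :
    (-1 : ℤ) ^ (ntuT1 p ω n).val = ntuSign1 p (Algebra.trace (ZMod p) F (ω ^ n)) := by
  rw [ntuT1, ntuSign1, legendreSym_val]
  rcases eq_or_ne (Algebra.trace (ZMod p) F (ω ^ n)) 0 with h | h
  · simp [h]
  · rcases quadraticChar_dichotomy h with h' | h' <;> simp [h, h', ZMod.val_one]

theorem neg_one_pow_ntuT2 (ω : F) (n : ℕ) :
    (-1 : ℤ) ^ (ntuT2 p ω n).val = ntuSign2 p (Algebra.trace (ZMod p) F (ω ^ n)) := by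
  rw [ntuT2, ntuSign2, legendreSym_val]
  rcases eq_or_ne (Algebra.trace (ZMod p) F (ω ^ n)) 0 with h | h
  · simp [h, ZMod.val_one]
  · rcases quadraticChar_dichotomy h with h' | h' <;> simp [h, h', ZMod.val_one]

theorem periodic_ntuT1 {ω : F} {N : ℕ} {c : ZMod p} (hN : ω ^ N = algebraMap (ZMod p) F c)
    (hc : quadraticChar (ZMod p) c = 1) : Periodic (ntuT1 p ω) N := fun n => by
  simp only [ntuT1, pow_add, hN, mul_comm _ (algebraMap _ _ c), ← Algebra.smul_def, map_smul,
    smul_eq_mul, legendreSym_val, map_mul, hc, one_mul]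

theorem periodic_ntuT2 {ω : F} {N : ℕ} {c : ZMod p} (hN : ω ^ N = algebraMap (ZMod p) F c)
    (hc : quadraticChar (ZMod p) c = 1) : Periodic (ntuT2 p ω) N := fun n => by
  simp only [ntuT2, pow_add, hN, mul_comm _ (algebraMap _ _ c), ← Algebra.smul_def, map_smul,
    smul_eq_mul, legendreSym_val, map_mul, hc, one_mul]

theorem sum_ntuSign1 (hp : p ≠ 2) : ∑ a, ntuSign1 p a = 1 := by
  simp only [ntuSign1, sum_add_distrib,
    quadraticChar_sum_zero (F := ZMod p) (by rwa [ZMod.ringChar_zmod_n])]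
  simp

theorem sum_ntuSign2 (hp : p ≠ 2) : ∑ a, ntuSign2 p a = -1 := by
  simp only [ntuSign2, sum_sub_distrib,
    quadraticChar_sum_zero (F := ZMod p) (by rwa [ZMod.ringChar_zmod_n])]
  simp

theorem sum_ntuSign1_mul_ntuSign2_mul {c : ZMod p} (hc : c ≠ 0) :
    ∑ a, ntuSign1 p a * ntuSign2 p (c * a) = quadraticChar (ZMod p) c * (p - 1) - 1 := by
  have h (a : ZMod p) : ntuSign1 p a * ntuSign2 p (c * a) =
      quadraticChar (ZMod p) c * (1 - if a = 0 then 1 else 0) - if a = 0 then 1 else 0 := by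
    rcases eq_or_ne a 0 with rfl | ha
    · simp [ntuSign1, ntuSign2]
    · have := quadraticChar_sq_one ha
      simp only [ntuSign1, ntuSign2, mul_eq_zero, hc, ha, or_self, if_false, map_mul]
      linear_combination quadraticChar (ZMod p) c * this
  simp [h, sum_sub_distrib, ← mul_sum, ZMod.card]

theorem mul_sum_ntuSign_trace_mul_ntuSign_trace_algebraMap_mul [Fintype F] {c : ZMod p}
    (hc : c ≠ 0) :
    (p : ℤ) * ∑ x : F, ntuSign1 p (Algebra.trace (ZMod p) F x) *
        ntuSign2 p (Algebra.trace (ZMod p) F (algebraMap (ZMod p) F c * x)) =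
      Fintype.card F * (quadraticChar (ZMod p) c * (p - 1) - 1) := by
  have h := card_nsmul_sum_comp_trace (F := F) fun a => ntuSign1 p a * ntuSign2 p (c * a)
  simp only [ZMod.card, nsmul_eq_mul, sum_ntuSign1_mul_ntuSign2_mul hc] at h
  simpa only [← Algebra.smul_def, map_smul, smul_eq_mul] using h

theorem sq_mul_sum_ntuSign_trace_mul_ntuSign_trace_mul [Fintype F] (hp : p ≠ 2) {y : F}
    (hy : y ∉ Set.range (algebraMap (ZMod p) F)) :
    (p : ℤ) ^ 2 * ∑ x : F, ntuSign1 p (Algebra.trace (ZMod p) F x) *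
        ntuSign2 p (Algebra.trace (ZMod p) F (y * x)) = -Fintype.card F := by
  have h := card_sq_nsmul_sum_comp_trace_trace_mul hy fun a b => ntuSign1 p a * ntuSign2 p b
  simp only [ZMod.card, nsmul_eq_mul, ← mul_sum, ← sum_mul, sum_ntuSign1 hp,
    sum_ntuSign2 hp] at h
  push_cast at h
  linarith

end Signs

section Sequences

variable {p m : ℕ} [Fact p.Prime] {F : Type} [Field F] [Fintype F] [Algebra (ZMod p) F]
  {ω : F} {Q : ℕ}

theorem exists_algebraMap_eq_pow_quadraticChar_eq_neg_one (hp : p ≠ 2)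
    (hω : orderOf ω = Fintype.card F - 1) (hQ : (p - 1) * Q = Fintype.card F - 1) :
    ∃ u : ZMod p, algebraMap (ZMod p) F u = ω ^ Q ∧ quadraticChar (ZMod p) u = -1 := by
  have hp1 := (Fact.out : p.Prime).one_lt
  have hF := Fintype.one_lt_card (α := F)
  have hQ0 : 0 < Q := Nat.pos_of_ne_zero (by rintro rfl; omega)
  have hord : orderOf (ω ^ Q) = p - 1 := by
    rw [orderOf_pow_of_dvd hQ0.ne' (hω ▸ ⟨p - 1, by rw [← hQ, mul_comm]⟩), hω, ← hQ,
      Nat.mul_div_cancel _ hQ0]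
  have hfix : (ω ^ Q) ^ p = ω ^ Q := by
    rw [← Nat.sub_add_cancel hp1.le, pow_succ, ← hord, pow_orderOf_eq_one, one_mul]
  have := charP_of_injective_algebraMap (algebraMap (ZMod p) F).injective p
  obtain ⟨n, hn⟩ := (mem_bot_iff_intCast p F).1 ((Subfield.mem_bot_iff_pow_eq_self F p).2 hfix)
  refine ⟨n, by rw [map_intCast, hn], ?_⟩
  have hu : orderOf (n : ZMod p) = p - 1 := by
    rw [← orderOf_injective (algebraMap (ZMod p) F : ZMod p →* F)
      (algebraMap (ZMod p) F).injective, ← hord]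
    simp [hn]
  have hu0 : (n : ZMod p) ≠ 0 := by
    rintro h
    rw [h, orderOf_zero] at hu
    omega
  rw [quadraticChar_eq_pow_of_char_ne_two (by rwa [ZMod.ringChar_zmod_n]) hu0, ZMod.card,
    if_neg (pow_ne_one_of_lt_orderOf (by omega) (by omega))]

theorem exists_pow_two_mul_eq_algebraMap_quadraticChar_eq_one (hp : p ≠ 2)
    (hω : orderOf ω = Fintype.card F - 1) (hQ : (p - 1) * Q = Fintype.card F - 1) :
    ∃ c : ZMod p, ω ^ (2 * Q) = algebraMap (ZMod p) F c ∧ quadraticChar (ZMod p) c = 1 := by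
  obtain ⟨u, hu, hu'⟩ := exists_algebraMap_eq_pow_quadraticChar_eq_neg_one hp hω hQ
  refine ⟨u ^ 2, by rw [map_pow, hu, ← pow_mul, mul_comm], quadraticChar_sq_one' ?_⟩
  rintro rfl
  simp at hu'

theorem periodic_ntuT1_two_mul (hp : p ≠ 2) (hω : orderOf ω = Fintype.card F - 1)
    (hQ : (p - 1) * Q = Fintype.card F - 1) : Periodic (ntuT1 p ω) (2 * Q) :=
  have ⟨_, hc, hc'⟩ := exists_pow_two_mul_eq_algebraMap_quadraticChar_eq_one hp hω hQ
  periodic_ntuT1 hc hc'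

theorem periodic_ntuT2_two_mul (hp : p ≠ 2) (hω : orderOf ω = Fintype.card F - 1)
    (hQ : (p - 1) * Q = Fintype.card F - 1) : Periodic (ntuT2 p ω) (2 * Q) :=
  have ⟨_, hc, hc'⟩ := exists_pow_two_mul_eq_algebraMap_quadraticChar_eq_one hp hω hQ
  periodic_ntuT2 hc hc'

theorem dvd_of_pow_mem_range_algebraMap (hω : orderOf ω = Fintype.card F - 1)
    (hQ : (p - 1) * Q = Fintype.card F - 1) {d : ℕ}
    (hd : ω ^ d ∈ Set.range (algebraMap (ZMod p) F)) : Q ∣ d := by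
  obtain ⟨c, hc⟩ := hd
  have hp1 := (Fact.out : p.Prime).one_lt
  have hc0 : c ≠ 0 := by
    rintro rfl
    rw [map_zero, eq_comm] at hc
    exact ne_zero_of_orderOf_eq_card_sub_one hω (eq_zero_of_pow_eq_zero hc)
  have h : ω ^ (d * (p - 1)) = 1 := by
    rw [pow_mul, ← hc, ← map_pow, ZMod.pow_card_sub_one_eq_one hc0, map_one]
  have := orderOf_dvd_of_pow_eq_one h
  rw [hω, ← hQ, mul_comm d] at this
  exact Nat.dvd_of_mul_dvd_mul_left (by omega) this

theorem sub_one_mul_pcorr_ntuT1_ntuT2 (hp : p ≠ 2) (hω : orderOf ω = Fintype.card F - 1)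
    (hQ : (p - 1) * Q = Fintype.card F - 1) {d : ℕ} {τ : ℤ} (hd : (d : ℤ) ≡ τ [ZMOD (2 * Q : ℕ)]) :
    ((p : ℤ) - 1) * pcorr (2 * Q) (ntuT1 p ω) (ntuT2 p ω) τ =
      2 * (∑ x : F, ntuSign1 p (Algebra.trace (ZMod p) F x) *
        ntuSign2 p (Algebra.trace (ZMod p) F (ω ^ d * x)) + 1) := by
  obtain ⟨k, hk⟩ := (Fact.out : p.Prime).odd_of_ne_two hp
  have h₁ := periodic_ntuT1_two_mul hp hω hQ
  have h₂ := periodic_ntuT2_two_mul hp hω hQ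
  set g : ℕ → ℤ := fun j => (-1) ^ (ntuT1 p ω j + ntuT2 p ω (j + d)).val
  have hg : Periodic g (2 * Q) := fun j => by
    simp only [g, h₁ j, add_right_comm j (2 * Q) d, h₂ (j + d)]
  have hgω (j : ℕ) : g j = ntuSign1 p (Algebra.trace (ZMod p) F (ω ^ j)) *
      ntuSign2 p (Algebra.trace (ZMod p) F (ω ^ d * ω ^ j)) := by
    simp only [g, ZMod.neg_one_pow_val_add, neg_one_pow_ntuT1, neg_one_pow_ntuT2, pow_add,
      mul_comm (ω ^ j)]
  have hkQ : k * (2 * Q) = Fintype.card F - 1 := by rw [← hQ, hk, Nat.add_sub_cancel]; ring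
  rw [pcorr_eq_sum_of_modEq h₂ hd, ← sum_range_pow_add_apply_zero hω]
  calc ((p : ℤ) - 1) * ∑ j ∈ range (2 * Q), g j = 2 * (k • ∑ j ∈ range (2 * Q), g j) := by
        rw [nsmul_eq_mul, hk]; push_cast; ring
    _ = _ := by
        rw [← hg.sum_range_mul, hkQ]
        simp [hgω, ntuSign1, ntuSign2]

theorem sum_ntuSign_trace_mul_ntuSign_trace_pow_mul_of_dvd (hp : p ≠ 2) (hm : 1 ≤ m)
    (hcard : Fintype.card F = p ^ m) (hω : orderOf ω = Fintype.card F - 1)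
    (hQ : (p - 1) * Q = Fintype.card F - 1) (r : ℕ) :
    ∑ x : F, ntuSign1 p (Algebra.trace (ZMod p) F x) *
        ntuSign2 p (Algebra.trace (ZMod p) F (ω ^ (Q * r) * x)) =
      (p : ℤ) ^ (m - 1) * ((-1) ^ r * (p - 1) - 1) := by
  obtain ⟨u, hu, hu'⟩ := exists_algebraMap_eq_pow_quadraticChar_eq_neg_one hp hω hQ
  have h := mul_sum_ntuSign_trace_mul_ntuSign_trace_algebraMap_mul (F := F)
    (pow_ne_zero r (show u ≠ 0 by rintro rfl; simp at hu'))
  rw [map_pow, hu, ← pow_mul, map_pow, hu', hcard, Nat.cast_pow,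
    show m = m - 1 + 1 by omega, pow_succ', mul_assoc] at h
  exact mul_left_cancel₀ (show (p : ℤ) ≠ 0 by exact_mod_cast (Fact.out : p.Prime).ne_zero) h

theorem sum_ntuSign_trace_mul_ntuSign_trace_pow_mul_of_not_dvd (hp : p ≠ 2) (hm : 2 ≤ m)
    (hcard : Fintype.card F = p ^ m) (hω : orderOf ω = Fintype.card F - 1)
    (hQ : (p - 1) * Q = Fintype.card F - 1) {d : ℕ} (hd : ¬ Q ∣ d) :
    ∑ x : F, ntuSign1 p (Algebra.trace (ZMod p) F x) *
        ntuSign2 p (Algebra.trace (ZMod p) F (ω ^ d * x)) = -(p : ℤ) ^ (m - 2) := by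
  have h := sq_mul_sum_ntuSign_trace_mul_ntuSign_trace_mul hp
    fun h => hd (dvd_of_pow_mem_range_algebraMap hω hQ h)
  rw [hcard, Nat.cast_pow, show m = m - 2 + 2 by omega, pow_add, mul_comm, ← neg_mul] at h
  exact mul_right_cancel₀
    (pow_ne_zero 2 (show (p : ℤ) ≠ 0 by exact_mod_cast (Fact.out : p.Prime).ne_zero)) h

theorem sum_ntuSign_trace_mul_ntuSign_trace_pow_mul (hp : p ≠ 2) (hm : 2 ≤ m)
    (hcard : Fintype.card F = p ^ m) (hω : orderOf ω = Fintype.card F - 1)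
    (hQ : (p - 1) * Q = Fintype.card F - 1) (d : ℕ) :
    ∑ x : F, ntuSign1 p (Algebra.trace (ZMod p) F x) *
        ntuSign2 p (Algebra.trace (ZMod p) F (ω ^ d * x)) =
      if (d : ZMod (2 * Q)) = Q then -(p : ℤ) ^ m
      else if (d : ZMod (2 * Q)) = 0 then (p : ℤ) ^ (m - 1) * (p - 2)
      else -(p : ℤ) ^ (m - 2) := by
  have hQ0 : 0 < Q := Nat.pos_of_ne_zero fun h => by
    have := Fintype.one_lt_card (α := F)
    rw [h, mul_zero] at hQ
    omega
  have hQ0' : (Q : ZMod (2 * Q)) ≠ 0 := by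
    rw [Ne, ZMod.natCast_eq_zero_iff]
    exact fun h => by have := Nat.le_of_dvd hQ0 h; omega
  by_cases hQd : Q ∣ d
  · obtain ⟨r, rfl⟩ := hQd
    rw [sum_ntuSign_trace_mul_ntuSign_trace_pow_mul_of_dvd hp (by omega) hcard hω hQ]
    rcases Nat.even_or_odd r with ⟨s, rfl⟩ | ⟨s, rfl⟩
    · have h0 : ((Q * (s + s) : ℕ) : ZMod (2 * Q)) = 0 :=
        (ZMod.natCast_eq_zero_iff _ _).2 ⟨s, by ring⟩
      rw [h0, if_neg (Ne.symm hQ0'), if_pos rfl, Even.neg_one_pow ⟨s, rfl⟩]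
      ring
    · have hQ' : ((Q * (2 * s + 1) : ℕ) : ZMod (2 * Q)) = Q := by
        rw [show Q * (2 * s + 1) = Q + 2 * Q * s by ring, Nat.cast_add, Nat.cast_mul,
          ZMod.natCast_self, zero_mul, add_zero]
      rw [hQ', if_pos rfl, Odd.neg_one_pow ⟨s, rfl⟩, ← Nat.sub_add_cancel (by omega : 1 ≤ m),
        pow_succ, Nat.add_sub_cancel]
      ring
  · have hd : ¬ (d : ZMod (2 * Q)) = Q := by
      rw [ZMod.natCast_eq_natCast_iff', Nat.mod_eq_of_lt (show Q < 2 * Q by omega)]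
      intro h
      rw [← Nat.dvd_mod_iff (dvd_mul_left Q 2), h] at hQd
      exact hQd dvd_rfl
    have hd0 : ¬ (d : ZMod (2 * Q)) = 0 := by
      rw [ZMod.natCast_eq_zero_iff]
      exact fun h => hQd (dvd_trans (dvd_mul_left Q 2) h)
    rw [sum_ntuSign_trace_mul_ntuSign_trace_pow_mul_of_not_dvd hp hm hcard hω hQ hQd,
      if_neg hd, if_neg hd0]

theorem pcorr_ntuT1_ntuT2 (hp : p ≠ 2) (hm : 2 ≤ m) (hcard : Fintype.card F = p ^ m)
    (hω : orderOf ω = Fintype.card F - 1) (hQ : (p - 1) * Q = Fintype.card F - 1) {N1 N2 : ℤ}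
    (hN1 : N1 = -2 * (p : ℤ) ^ (m - 1) + 2 * ((p : ℤ) ^ (m - 1) - 1) / ((p : ℤ) - 1))
    (hN2 : N2 = 2 * ((p : ℤ) ^ (m - 2) - 1) / ((p : ℤ) - 1)) (τ : ℤ) :
    pcorr (2 * Q) (ntuT1 p ω) (ntuT2 p ω) τ =
      if (τ : ZMod (2 * Q)) = Q then -(2 * Q : ℤ)
      else if (τ : ZMod (2 * Q)) = 0 then -N1 else -N2 := by
  have hp1 := (Fact.out : p.Prime).one_lt
  have hpm : 1 < p ^ m := hcard ▸ Fintype.one_lt_card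
  have hQ0 : Q ≠ 0 := by
    rintro rfl
    rw [mul_zero, hcard] at hQ
    omega
  have hQ' : ((p : ℤ) - 1) * Q = p ^ m - 1 := by
    rw [hcard] at hQ
    zify [hp1.le, hpm.le] at hQ
    exact hQ
  set d := (τ % (2 * Q : ℕ)).toNat
  have hd : (d : ℤ) ≡ τ [ZMOD (2 * Q : ℕ)] := by
    rw [Int.toNat_of_nonneg (Int.emod_nonneg _ (by omega))]
    exact Int.mod_modEq _ _
  have hτ : (τ : ZMod (2 * Q)) = d := by
    rw [← Int.cast_natCast, (ZMod.intCast_eq_intCast_iff _ _ _).2 hd]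
  have h := sub_one_mul_pcorr_ntuT1_ntuT2 hp hω hQ hd
  rw [sum_ntuSign_trace_mul_ntuSign_trace_pow_mul hp hm hcard hω hQ d, ← hτ] at h
  obtain ⟨a, ha⟩ := sub_one_dvd_pow_sub_one (p : ℤ) (m - 1)
  obtain ⟨b, hb⟩ := sub_one_dvd_pow_sub_one (p : ℤ) (m - 2)
  have hp0 : (p : ℤ) - 1 ≠ 0 := by omega
  rw [ha, Int.mul_ediv_assoc _ (dvd_mul_right _ _), Int.mul_ediv_cancel_left _ hp0] at hN1
  rw [hb, Int.mul_ediv_assoc _ (dvd_mul_right _ _), Int.mul_ediv_cancel_left _ hp0] at hN2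
  refine mul_left_cancel₀ hp0 (h.trans ?_)
  split_ifs
  · linear_combination 2 * hQ'
  · linear_combination ((p : ℤ) - 1) * hN1 - 2 * ha
  · linear_combination ((p : ℤ) - 1) * hN2 - 2 * hb

end Sequences

theorem stmt14_general (p m : ℕ) [Fact p.Prime] (hp2 : p ≠ 2) (hm : 1 < m)
    (F : Type) [Field F] [Fintype F] [Algebra (ZMod p) F]
    (hcard : Fintype.card F = p ^ m) (ω : F) (hω : orderOf ω = p ^ m - 1)
    (N : ℕ) (hN : N = 2 * (p ^ m - 1) / (p - 1)) (N1 N2 : ℤ)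
    (hN1 : N1 = -2 * (p : ℤ) ^ (m - 1) + 2 * ((p : ℤ) ^ (m - 1) - 1) / ((p : ℤ) - 1))
    (hN2 : N2 = 2 * ((p : ℤ) ^ (m - 2) - 1) / ((p : ℤ) - 1))
    (e1 e2 : ℕ)
    (hcond1 : ¬ ((e1 : ℤ) + (e2 : ℤ) ≡ 1 [ZMOD (N : ℤ)]))
    (hcond2 : ¬ ((e1 : ℤ) + (e2 : ℤ) ≡ 1 - ((N / 2 : ℕ) : ℤ) [ZMOD (N : ℤ)]))
    (τ0 : ℤ) :
    pcorr (2 * N) (ntuInterleave (ntuT1 p ω) (ntuT2 p ω) e1) (ntuInterleave (ntuT1 p ω) (ntuT2 p ω) e2) (2 * τ0 + 1) =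
      if τ0 ≡ -(e2 : ℤ) - ((N / 2 : ℕ) : ℤ) [ZMOD (N : ℤ)] ∨ τ0 ≡ (e1 : ℤ) - 1 + ((N / 2 : ℕ) : ℤ) [ZMOD (N : ℤ)] then
        -(N : ℤ) - N2
      else if τ0 ≡ -(e2 : ℤ) [ZMOD (N : ℤ)] ∨ τ0 ≡ (e1 : ℤ) - 1 [ZMOD (N : ℤ)] then
        -N1 - N2
      else -2 * N2 := by
  obtain ⟨Q, hQ⟩ := Nat.sub_one_dvd_pow_sub_one p m
  have hp1 := (Fact.out : p.Prime).one_lt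
  rw [hQ, mul_left_comm, Nat.mul_div_cancel_left _ (by omega)] at hN
  subst hN
  rw [← hcard] at hω hQ
  rw [pcorr_ntuInterleave_two_mul_add_one (periodic_ntuT1_two_mul hp2 hω hQ.symm)
      (periodic_ntuT2_two_mul hp2 hω hQ.symm),
    pcorr_ntuT1_ntuT2 hp2 hm hcard hω hQ.symm hN1 hN2,
    pcorr_ntuT1_ntuT2 hp2 hm hcard hω hQ.symm hN1 hN2, Nat.mul_div_cancel_left _ two_pos]
  rw [Nat.mul_div_cancel_left _ two_pos] at hcond2
  simp only [← ZMod.intCast_eq_intCast_iff] at hcond1 hcond2 ⊢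
  push_cast at hcond1 hcond2 ⊢
  have hQQ : (Q : ZMod (2 * Q)) + Q = 0 := by
    rw [← two_mul]
    exact_mod_cast ZMod.natCast_self (2 * Q)
  split_ifs <;> grind

theorem stmt14 (p m : ℕ) [Fact p.Prime] (hp2 : p ≠ 2) (hm : 1 < m)
    (F : Type) [Field F] [Fintype F] [Algebra (ZMod p) F]
    (hcard : Fintype.card F = p ^ m) (ω : F) (hω : orderOf ω = p ^ m - 1)
    (N : ℕ) (hN : N = 2 * (p ^ m - 1) / (p - 1)) (N1 N2 : ℤ)
    (hN1 : N1 = -2 * (p : ℤ) ^ (m - 1) + 2 * ((p : ℤ) ^ (m - 1) - 1) / ((p : ℤ) - 1))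
    (hN2 : N2 = 2 * ((p : ℤ) ^ (m - 2) - 1) / ((p : ℤ) - 1))
    (e1 e2 : ℕ) (he1 : e1 < N) (he2 : e2 < N) (hlt : e1 < e2)
    (hcond1 : ¬ ((e1 : ℤ) + (e2 : ℤ) ≡ 1 [ZMOD (N : ℤ)]))
    (hcond2 : ¬ ((e1 : ℤ) + (e2 : ℤ) ≡ 1 - ((N / 2 : ℕ) : ℤ) [ZMOD (N : ℤ)]))
    (τ0 : ℤ) (hτ0 : 0 ≤ τ0) (hτ1 : τ0 ≤ (N : ℤ) - 1) :
    pcorr (2 * N) (ntuInterleave (ntuT1 p ω) (ntuT2 p ω) e1) (ntuInterleave (ntuT1 p ω) (ntuT2 p ω) e2) (2 * τ0 + 1) =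
      if τ0 ≡ -(e2 : ℤ) - ((N / 2 : ℕ) : ℤ) [ZMOD (N : ℤ)] ∨ τ0 ≡ (e1 : ℤ) - 1 + ((N / 2 : ℕ) : ℤ) [ZMOD (N : ℤ)] then
        -(N : ℤ) - N2
      else if τ0 ≡ -(e2 : ℤ) [ZMOD (N : ℤ)] ∨ τ0 ≡ (e1 : ℤ) - 1 [ZMOD (N : ℤ)] then
        -N1 - N2
      else -2 * N2 :=
  stmt14_general p m hp2 hm F hcard ω hω N hN N1 N2 hN1 hN2 e1 e2 hcond1 hcond2 τ0
end

section
/- Let e ∈ {0, 1, …, N−1}, let T^(1)(x) = Σ_{i=0}^{N−1} t^(1)_i x^i ∈ F_2[x] and S^e(x) = Σ_{i=0}^{2N−1} s^e_i x^i ∈ F_2[x]. Then S^e(x) ≡ (x^{3N − 2e + 1} + 1)·T^(1)(x^2) + x^{2N − 2e + 1}·Σ_{i=0}^{N−1} x^{2i} (mod x^{2N} − 1) in F_2[x]. -/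
open Polynomial Finset in
private lemma ntu_exists_alpha (p m : ℕ) [Fact p.Prime] (hp2 : p ≠ 2) (hm : 1 < m)
    (F : Type) [Field F] [Fintype F] [Algebra (ZMod p) F]
    (ω : F) (hω : orderOf ω = p ^ m - 1)
    (d : ℕ) (hd : p ^ m - 1 = d * (p - 1)) (hd0 : d ≠ 0) :
    ∃ a : ZMod p, algebraMap (ZMod p) F a = ω ^ d ∧ ¬ IsSquare a := by
  classical
  have hp : p.Prime := Fact.out
  have hp3 : 3 ≤ p := by
    rcases hp.two_le.lt_or_eq with h | h
    · omega
    · omega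
  have hωpow : ω ^ (p ^ m - 1) = 1 := by rw [← hω]; exact pow_orderOf_eq_one ω
  -- ω^d is a root of x^p = x
  have hroot : (ω ^ d) ^ p = ω ^ d := by
    have hdp : d * p = d * (p - 1) + d := by
      conv_lhs => rw [← Nat.succ_pred_eq_of_pos (by omega : 0 < p)]
      rw [Nat.mul_succ]
      rfl
    have : d * p = d + (p ^ m - 1) := by omega
    rw [← pow_mul, this, pow_add, hωpow, mul_one]
  -- existence of the preimage
  have hinj : Function.Injective (algebraMap (ZMod p) F) := (algebraMap (ZMod p) F).injective
  have hmem : ω ^ d ∈ Finset.univ.image (algebraMap (ZMod p) F) := by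
    by_contra hmem
    set f : F[X] := X ^ p - X with hf
    have hfd : f.natDegree = p := by
      rw [hf, natDegree_sub_eq_left_of_natDegree_lt, natDegree_X_pow]
      rw [natDegree_X, natDegree_X_pow]; omega
    have hf0 : f ≠ 0 := by
      intro h; rw [h] at hfd; simp at hfd; omega
    have hsub : insert (ω ^ d) (Finset.univ.image (algebraMap (ZMod p) F)) ⊆ f.roots.toFinset := by
      intro x hx
      rw [Multiset.mem_toFinset, mem_roots hf0]
      simp only [Finset.mem_insert, Finset.mem_image] at hx
      rcases hx with rfl | ⟨a, _, rfl⟩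
      · simp [hf, IsRoot, hroot]
      · simp [hf, IsRoot, ← map_pow, ZMod.pow_card]
    have hcard1 : (insert (ω ^ d) (Finset.univ.image (algebraMap (ZMod p) F))).card = p + 1 := by
      rw [Finset.card_insert_of_notMem hmem, Finset.card_image_of_injective _ hinj,
        Finset.card_univ, ZMod.card]
    have hcard2 : f.roots.toFinset.card ≤ p := by
      calc f.roots.toFinset.card ≤ Multiset.card f.roots := f.roots.toFinset_card_le
        _ ≤ f.natDegree := f.card_roots'
        _ = p := hfd
    have := Finset.card_le_card hsub
    omega
  simp only [Finset.mem_image] at hmem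
  obtain ⟨a, -, ha⟩ := hmem
  refine ⟨a, ha, ?_⟩
  -- order of a is p - 1
  have horda : orderOf a = p - 1 := by
    have h1 := orderOf_injective (algebraMap (ZMod p) F).toMonoidHom hinj a
    simp only [RingHom.toMonoidHom_eq_coe, MonoidHom.coe_coe] at h1
    have hoωd : orderOf (ω ^ d) = p - 1 := by
      have h2 : (ω ^ d) ^ (p - 1) = 1 := by rw [← pow_mul, ← hd, hωpow]
      have h3 : orderOf (ω ^ d) ∣ p - 1 := orderOf_dvd_of_pow_eq_one h2
      have h4 : (p - 1) ∣ orderOf (ω ^ d) := by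
        have h5 : ω ^ (d * orderOf (ω ^ d)) = 1 := by
          rw [pow_mul]; exact pow_orderOf_eq_one _
        have h6 : (p ^ m - 1) ∣ d * orderOf (ω ^ d) := by
          rw [← hω]; exact orderOf_dvd_of_pow_eq_one h5
        rw [hd] at h6
        exact (Nat.mul_dvd_mul_iff_left (Nat.pos_of_ne_zero hd0)).1 h6
      exact Nat.dvd_antisymm h3 h4
    rw [← h1, ha, hoωd]
  rintro ⟨b, hb⟩
  have hb0 : b ≠ 0 := by
    rintro rfl
    rw [mul_zero] at hb
    subst hb
    have h7 := pow_orderOf_eq_one (0 : ZMod p)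
    rw [horda, zero_pow (by omega : p - 1 ≠ 0)] at h7
    exact zero_ne_one h7
  obtain ⟨k, hk⟩ := hp.odd_of_ne_two hp2
  have hpe : 2 * ((p - 1) / 2) = p - 1 := by omega
  have hpow : a ^ ((p - 1) / 2) = 1 := by
    rw [hb, ← sq, ← pow_mul, hpe]
    exact ZMod.pow_card_sub_one_eq_one hb0
  have h8 := Nat.le_of_dvd (by omega) (horda ▸ orderOf_dvd_of_pow_eq_one hpow)
  omega

private lemma ntu_flip (p : ℕ) [Fact p.Prime] (F : Type) [Field F] [Fintype F] [Algebra (ZMod p) F]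
    (ω : F) (d : ℕ) (a : ZMod p) (ha : algebraMap (ZMod p) F a = ω ^ d) (hns : ¬ IsSquare a)
    (n : ℕ) :
    legendreSym p ((Algebra.trace (ZMod p) F (ω ^ (n + d))).val : ℤ)
      = - legendreSym p ((Algebra.trace (ZMod p) F (ω ^ n)).val : ℤ) := by
  have htr : Algebra.trace (ZMod p) F (ω ^ (n + d)) = a * Algebra.trace (ZMod p) F (ω ^ n) := by
    have h0 : ω ^ (n + d) = a • ω ^ n := by
      rw [Algebra.smul_def, ha, pow_add, mul_comm]
    rw [h0, map_smul, smul_eq_mul]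
  have hcast : ∀ x : ZMod p, (((x.val : ℤ) : ZMod p)) = x := by
    intro x
    push_cast [ZMod.natCast_val, ZMod.cast_id]
    rfl
  have key : ∀ x y : ZMod p,
      legendreSym p (((x * y).val : ℤ))
        = legendreSym p ((x.val : ℤ)) * legendreSym p ((y.val : ℤ)) := by
    intro x y
    rw [← legendreSym.mul]
    unfold legendreSym
    congr 1
    rw [Int.cast_mul, hcast, hcast, hcast]
  have hla : legendreSym p ((a.val : ℤ)) = -1 := by
    rw [legendreSym.eq_neg_one_iff]
    rw [hcast a]
    exact hns
  rw [htr, key, hla]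
  ring

private lemma ntu_T2_eq (p : ℕ) [Fact p.Prime] (F : Type) [Field F] [Fintype F] [Algebra (ZMod p) F]
    (ω : F) (d : ℕ) (a : ZMod p) (ha : algebraMap (ZMod p) F a = ω ^ d) (hns : ¬ IsSquare a)
    (n : ℕ) : ntuT2 p ω n = 1 + ntuT1 p ω (n + d) := by
  have hf := ntu_flip p F ω d a ha hns n
  unfold ntuT1 ntuT2
  rw [hf]
  set L := legendreSym p ((Algebra.trace (ZMod p) F (ω ^ n)).val : ℤ) with hL
  by_cases h : L = 1
  · rw [if_pos h, if_pos (show -L = -1 by rw [h])]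
    decide
  · rw [if_neg h, if_neg (fun hc => h (neg_inj.mp hc))]
    decide

private lemma ntu_T1_period (p : ℕ) [Fact p.Prime] (F : Type) [Field F] [Fintype F] [Algebra (ZMod p) F]
    (ω : F) (d : ℕ) (a : ZMod p) (ha : algebraMap (ZMod p) F a = ω ^ d) (hns : ¬ IsSquare a)
    (n : ℕ) : ntuT1 p ω (n + 2 * d) = ntuT1 p ω n := by
  have h1 := ntu_flip p F ω d a ha hns (n + d)
  have h2 := ntu_flip p F ω d a ha hns n
  unfold ntuT1
  rw [show n + 2 * d = n + d + d by ring, h1, h2, neg_neg]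

private lemma ntu_T1_mod (p : ℕ) [Fact p.Prime] (F : Type) [Field F] [Fintype F] [Algebra (ZMod p) F]
    (ω : F) (d : ℕ) (a : ZMod p) (ha : algebraMap (ZMod p) F a = ω ^ d) (hns : ¬ IsSquare a)
    (N : ℕ) (hN2d : N = 2 * d) (hN0 : 0 < N)
    (n : ℕ) : ntuT1 p ω n = ntuT1 p ω (n % N) := by
  have key : ∀ k r : ℕ, ntuT1 p ω (r + N * k) = ntuT1 p ω r := by
    intro k
    induction k with
    | zero => simp
    | succ j ih =>
      intro r
      rw [show r + N * (j + 1) = (r + N * j) + 2 * d by rw [hN2d]; ring,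
        ntu_T1_period p F ω d a ha hns, ih]
  conv_lhs => rw [← Nat.mod_add_div n N]
  exact key (n / N) (n % N)

lemma ntu_Xpow_sub_dvd {R : Type*} [CommRing R] (x : R) (n a b : ℕ)
    (h : ∃ s, a = b + n * s ∨ b = a + n * s) : x ^ n - 1 ∣ x ^ a - x ^ b := by
  have key : ∀ u v : ℕ, ∀ s, u = v + n * s → x ^ n - 1 ∣ x ^ u - x ^ v := by
    intro u v s huv
    subst huv
    have h1 : x ^ (v + n * s) - x ^ v = x ^ v * ((x ^ n) ^ s - 1) := by
      rw [mul_sub, ← pow_mul, ← pow_add, mul_one]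
    rw [h1]
    exact Dvd.dvd.mul_left (by simpa using sub_dvd_pow_sub_pow (x ^ n) 1 s) _
  obtain ⟨s, h | h⟩ := h
  · exact key a b s h
  · rw [show x ^ a - x ^ b = -(x ^ b - x ^ a) by ring]
    exact (dvd_neg).2 (key b a s h)

lemma ntu_sum_range_two_mul {M : Type*} [AddCommMonoid M] (N : ℕ) (f : ℕ → M) :
    ∑ i ∈ Finset.range (2 * N), f i
      = ∑ j ∈ Finset.range N, f (2 * j) + ∑ j ∈ Finset.range N, f (2 * j + 1) := by
  induction N with
  | zero => simp
  | succ n ih =>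
    have h2 : 2 * (n + 1) = (2 * n) + 1 + 1 := by ring
    rw [h2, Finset.sum_range_succ, Finset.sum_range_succ, ih,
      Finset.sum_range_succ, Finset.sum_range_succ]
    abel


open Polynomial in
theorem stmt18 (p m : ℕ) [Fact p.Prime] (hp2 : p ≠ 2) (hm : 1 < m)
    (F : Type) [Field F] [Fintype F] [Algebra (ZMod p) F]
    (hcard : Fintype.card F = p ^ m) (ω : F) (hω : orderOf ω = p ^ m - 1)
    (N : ℕ) (hN : N = 2 * (p ^ m - 1) / (p - 1))
    (e : ℕ) (he : e < N)
    (T1x : Polynomial (ZMod 2)) (hT1x : T1x = ∑ i ∈ Finset.range N, C (ntuT1 p ω i) * X ^ i)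
    (Sx : Polynomial (ZMod 2))
    (hSx : Sx = ∑ i ∈ Finset.range (2 * N), C (ntuInterleave (ntuT1 p ω) (ntuT2 p ω) e i) * X ^ i) :
    (X ^ (2 * N) - 1 : Polynomial (ZMod 2)) ∣
      (Sx - ((X ^ (3 * N - 2 * e + 1) + 1) * T1x.comp (X ^ 2)
        + X ^ (2 * N - 2 * e + 1) * ∑ i ∈ Finset.range N, X ^ (2 * i))) := by
  classical
  have hp : p.Prime := Fact.out
  have hp3 : 3 ≤ p := by rcases hp.two_le.lt_or_eq with h | h <;> omega
  have hm0 : m ≠ 0 := by omega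
  have hx1 : 1 < p ^ m := Nat.one_lt_pow hm0 (by omega)
  set d : ℕ := (p ^ m - 1) / (p - 1) with hdd
  have hdvd : (p - 1) ∣ (p ^ m - 1) := by
    simpa using Nat.sub_dvd_pow_sub_pow p 1 m
  have hdmul : p ^ m - 1 = d * (p - 1) := (Nat.div_mul_cancel hdvd).symm
  have hd0 : d ≠ 0 := by
    intro h; rw [h, zero_mul] at hdmul; omega
  have hN2d : N = 2 * d := by
    rw [hN, hdd, Nat.mul_div_assoc 2 hdvd]
  have hN0 : 0 < N := by omega
  obtain ⟨a, ha, hns⟩ := ntu_exists_alpha p m hp2 hm F ω hω d hdmul hd0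
  set t1 : ℕ → ZMod 2 := ntuT1 p ω with ht1
  set t2 : ℕ → ZMod 2 := ntuT2 p ω with ht2
  set G : Polynomial (ZMod 2) := ∑ i ∈ Finset.range N, X ^ (2 * i) with hG
  set A : Polynomial (ZMod 2) := ∑ i ∈ Finset.range N, C (t1 i) * X ^ (2 * i) with hA
  set B' : Polynomial (ZMod 2) := ∑ j ∈ Finset.range N, C (t1 (j + e + d)) * X ^ (2 * j + 1)
    with hB'
  -- split of S^e(x) into even and odd parts
  have hSx2 : Sx = A + ((X * G) + B') := by
    rw [hSx, ntu_sum_range_two_mul]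
    congr 1
    · rw [hA]
      apply Finset.sum_congr rfl; intro j _
      unfold ntuInterleave
      rw [if_pos (by omega : 2 * j % 2 = 0)]
      have : 2 * j / 2 = j := by omega
      rw [this]
    · have h1 : ∀ j : ℕ, ntuInterleave t1 t2 e (2 * j + 1) = t2 (j + e) := by
        intro j
        unfold ntuInterleave
        rw [if_neg (by omega : ¬ (2 * j + 1) % 2 = 0)]
        have : (2 * j + 1) / 2 = j := by omega
        rw [this]
      have h2 : ∀ j : ℕ, t2 (j + e) = 1 + t1 (j + e + d) :=
        fun j => ntu_T2_eq p F ω d a ha hns (j + e)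
      have hXG : (∑ j ∈ Finset.range N, (X : Polynomial (ZMod 2)) ^ (2 * j + 1)) = X * G := by
        rw [hG, Finset.mul_sum]
        apply Finset.sum_congr rfl; intro j _
        rw [pow_succ]; ring
      rw [← hXG, ← Finset.sum_add_distrib]
      apply Finset.sum_congr rfl; intro j _
      rw [h1 j, h2 j, map_add, map_one]
      ring
  -- the composed polynomial
  have hcomp : T1x.comp (X ^ 2) = A := by
    rw [hT1x, Polynomial.sum_comp, hA]
    apply Finset.sum_congr rfl; intro i _
    rw [Polynomial.mul_comp, Polynomial.C_comp, Polynomial.pow_comp, Polynomial.X_comp,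
      ← pow_mul]
  set q : Polynomial (ZMod 2) := X ^ (2 * N) - 1 with hq
  have hq_eq : q = (X ^ 2 - 1) * G := by
    rw [hq, hG]
    have hgs := mul_geom_sum (X ^ 2 : Polynomial (ZMod 2)) N
    simp only [← pow_mul] at hgs ⊢
    rw [← hgs]
  -- divisibility for the geometric-sum part
  have hdvd1 : q ∣ (X ^ (2 * N - 2 * e + 1) * G - X * G) := by
    have hexp : 2 * N - 2 * e + 1 = 2 * (N - e) + 1 := by omega
    have h1 : X ^ (2 * N - 2 * e + 1) * G - X * G
        = (X * ((X ^ 2) ^ (N - e) - 1)) * G := by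
      rw [hexp, pow_succ, pow_mul]; ring
    obtain ⟨c, hc⟩ : (X ^ 2 - 1 : Polynomial (ZMod 2)) ∣ (X ^ 2) ^ (N - e) - 1 := by
      simpa using sub_dvd_pow_sub_pow (X ^ 2 : Polynomial (ZMod 2)) 1 (N - e)
    rw [h1, hc, hq_eq]
    exact ⟨X * c, by ring⟩
  -- divisibility for the shifted T1 part
  have hXA : X ^ (3 * N - 2 * e + 1) * A
      = ∑ i ∈ Finset.range N, C (t1 i) * X ^ (2 * i + (3 * N - 2 * e + 1)) := by
    rw [hA, Finset.mul_sum]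
    apply Finset.sum_congr rfl; intro i _
    rw [pow_add]; ring
  have hdvd2 : q ∣ (B' - X ^ (3 * N - 2 * e + 1) * A) := by
    rw [hXA]
    have hre : (∑ j ∈ Finset.range N,
          C (t1 ((j + e + d) % N)) * X ^ (2 * ((j + e + d) % N) + (3 * N - 2 * e + 1)))
        = ∑ i ∈ Finset.range N, C (t1 i) * X ^ (2 * i + (3 * N - 2 * e + 1)) := by
      apply Finset.sum_nbij' (i := fun j => (j + e + d) % N)
        (j := fun i => (i + (N - (e + d) % N)) % N)
      · intro x hx; exact Finset.mem_range.2 (Nat.mod_lt _ hN0)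
      · intro x hx; exact Finset.mem_range.2 (Nat.mod_lt _ hN0)
      · intro x hx
        have hx' : x < N := Finset.mem_range.1 hx
        have hk : (e + d) % N < N := Nat.mod_lt _ hN0
        have hdm := Nat.div_add_mod (e + d) N
        rw [Nat.mod_add_mod]
        have heq : x + e + d + (N - (e + d) % N) = x + N * ((e + d) / N + 1) := by
          rw [Nat.mul_succ]; omega
        rw [heq, Nat.add_mul_mod_self_left, Nat.mod_eq_of_lt hx']
      · intro x hx
        have hx' : x < N := Finset.mem_range.1 hx
        have hk : (e + d) % N < N := Nat.mod_lt _ hN0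
        have hdm := Nat.div_add_mod (e + d) N
        rw [show (x + (N - (e + d) % N)) % N + e + d
            = (x + (N - (e + d) % N)) % N + (e + d) by ring, Nat.mod_add_mod]
        have heq : x + (N - (e + d) % N) + (e + d) = x + N * ((e + d) / N + 1) := by
          rw [Nat.mul_succ]; omega
        rw [heq, Nat.add_mul_mod_self_left, Nat.mod_eq_of_lt hx']
      · intro x hx; rfl
    rw [← hre, hB', ← Finset.sum_sub_distrib]
    apply Finset.dvd_sum
    intro j hj
    have hj' : j < N := Finset.mem_range.1 hj
    have hmod : t1 (j + e + d) = t1 ((j + e + d) % N) := by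
      rw [ht1]; exact ntu_T1_mod p F ω d a ha hns N hN2d hN0 (j + e + d)
    rw [hmod, ← mul_sub]
    apply Dvd.dvd.mul_left
    rw [hq]
    apply ntu_Xpow_sub_dvd
    have hdm := Nat.div_add_mod (j + e + d) N
    have hiN : (j + e + d) % N < N := Nat.mod_lt _ hN0
    have ht3 : (j + e + d) / N < 3 := by
      rw [Nat.div_lt_iff_lt_mul hN0]; omega
    have hcase : (j + e + d) / N = 0 ∨ (j + e + d) / N = 1 ∨ (j + e + d) / N = 2 := by
      generalize (j + e + d) / N = k at ht3 ⊢; omega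
    rcases hcase with h | h | h <;> rw [h] at hdm
    · exact ⟨2, Or.inr (by omega)⟩
    · exact ⟨1, Or.inr (by omega)⟩
    · exact ⟨0, Or.inr (by omega)⟩
  -- assemble
  rw [hSx2, hcomp]
  have hsplit : A + (X * G + B')
        - ((X ^ (3 * N - 2 * e + 1) + 1) * A + X ^ (2 * N - 2 * e + 1) * G)
      = (B' - X ^ (3 * N - 2 * e + 1) * A)
        - (X ^ (2 * N - 2 * e + 1) * G - X * G) := by ring
  rw [hsplit]
  exact dvd_sub hdvd2 hdvd1
end

section
/- Let T^(1)(x) = Σ_{i=0}^{N−1} t^(1)_i x^i and T^(2)(x) = Σ_{i=0}^{N−1} t^(2)_i x^i in F_2[x]. Then T^(2)(x) ≡ x^{N/2}·T^(1)(x) + Σ_{i=0}^{N−1} x^i (mod x^N − 1) in F_2[x]. -/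
open Polynomial in
theorem stmt19 (p m : ℕ) [Fact p.Prime] (hp2 : p ≠ 2) (hm : 1 < m)
    (F : Type) [Field F] [Fintype F] [Algebra (ZMod p) F]
    (hcard : Fintype.card F = p ^ m) (ω : F) (hω : orderOf ω = p ^ m - 1)
    (N : ℕ) (hN : N = 2 * (p ^ m - 1) / (p - 1))
    (T1x : Polynomial (ZMod 2)) (hT1x : T1x = ∑ i ∈ Finset.range N, C (ntuT1 p ω i) * X ^ i)
    (T2x : Polynomial (ZMod 2)) (hT2x : T2x = ∑ i ∈ Finset.range N, C (ntuT2 p ω i) * X ^ i) :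
    (X ^ N - 1 : Polynomial (ZMod 2)) ∣
      (T2x - (X ^ (N / 2) * T1x + ∑ i ∈ Finset.range N, X ^ i)) := by
  classical
  classical
  have hp : p.Prime := Fact.out
  have hp3 : 3 ≤ p := by
    rcases hp.two_le.lt_or_eq with h | h
    · omega
    · omega
  have hpodd : p % 2 = 1 := Nat.odd_iff.mp (hp.odd_of_ne_two hp2)
  have hq1 : 1 < p ^ m := Nat.one_lt_pow (by omega) (by omega)
  have hKdvd : (p - 1) ∣ (p ^ m - 1) := by
    simpa using Nat.sub_dvd_pow_sub_pow p 1 m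
  set K := (p ^ m - 1) / (p - 1) with hKdef
  have hKmul : K * (p - 1) = p ^ m - 1 := Nat.div_mul_cancel hKdvd
  have hK0 : 0 < K := by
    have : p - 1 ≤ p ^ m - 1 := by
      have := Nat.le_self_pow (show m ≠ 0 by omega) p
      omega
    exact Nat.div_pos this (by omega)
  have hinj : Function.Injective (algebraMap (ZMod p) F) :=
    (algebraMap (ZMod p) F).injective
  have hωpow : ω ^ (p ^ m - 1) = 1 := hω ▸ pow_orderOf_eq_one ω
  set c := ω ^ K with hcdef
  have hc1 : c ^ (p - 1) = 1 := by
    rw [hcdef, ← pow_mul, hKmul, hωpow]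
  have hcp : c ^ p = c := by
    have : p = (p - 1) + 1 := by omega
    rw [this, pow_succ, hc1, one_mul]
  -- c is in the prime field
  haveI : CharP F p := charP_of_injective_algebraMap hinj p
  obtain ⟨c', hc'⟩ : ∃ c' : ZMod p, algebraMap (ZMod p) F c' = c := by
    set g : F[X] := X ^ p - X with hg
    have hgdeg : g.natDegree = p := by
      rw [hg]
      compute_degree
      · simp [if_neg (show ¬(1 = p) by omega)]
      · omega
    have hgne : g ≠ 0 := by
      intro h
      rw [h, natDegree_zero] at hgdeg
      omega
    have hsub : (Finset.univ.image (algebraMap (ZMod p) F)) ⊆ g.roots.toFinset := by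
      intro x hx
      obtain ⟨a, -, rfl⟩ := Finset.mem_image.mp hx
      rw [Multiset.mem_toFinset, mem_roots hgne]
      simp [hg, IsRoot, ← map_pow, ZMod.pow_card]
    have hcard1 : (Finset.univ.image (algebraMap (ZMod p) F)).card = p := by
      rw [Finset.card_image_of_injective _ hinj, Finset.card_univ, ZMod.card]
    have hcard2 : g.roots.toFinset.card ≤ p :=
      le_trans (Multiset.toFinset_card_le _) (le_trans (Polynomial.card_roots' g) hgdeg.le)
    have heq := Finset.eq_of_subset_of_card_le hsub (by omega)
    have hcroot : c ∈ g.roots.toFinset := by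
      rw [Multiset.mem_toFinset, mem_roots hgne]
      simp [hg, IsRoot, hcp]
    rw [← heq] at hcroot
    obtain ⟨a, -, ha⟩ := Finset.mem_image.mp hcroot
    exact ⟨a, ha⟩
  have horderc : orderOf c = p - 1 := by
    rw [hcdef, orderOf_pow' ω (by omega), hω, Nat.gcd_eq_right ⟨p - 1, hKmul.symm⟩,
      ← hKmul, Nat.mul_div_cancel_left _ hK0]
  have horderc' : orderOf c' = p - 1 := by
    rw [← horderc, ← hc']
    exact (orderOf_injective (algebraMap (ZMod p) F).toMonoidHom hinj c').symm
  have hc'1 : c' ^ (p - 1) = 1 := horderc' ▸ pow_orderOf_eq_one c'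
  have hc'0 : c' ≠ 0 := by
    intro h
    rw [h, zero_pow (by omega : p - 1 ≠ 0)] at hc'1
    exact zero_ne_one hc'1
  have hns : ¬ IsSquare c' := by
    rintro ⟨d, hd⟩
    have hd0 : d ≠ 0 := by rintro rfl; simp at hd; exact hc'0 hd
    have : c' ^ ((p - 1) / 2) = 1 := by
      rw [hd, show d * d = d ^ 2 from (sq d).symm, ← pow_mul,
        show 2 * ((p - 1) / 2) = p - 1 by omega]
      exact ZMod.pow_card_sub_one_eq_one hd0
    have hdvd := orderOf_dvd_of_pow_eq_one this
    rw [horderc'] at hdvd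
    have := Nat.le_of_dvd (by omega) hdvd
    omega
  have hlegc : legendreSym p ((c'.val : ℤ)) = -1 := by
    apply (legendreSym.eq_neg_one_iff (p := p)).mpr
    simpa [ZMod.natCast_val, ZMod.cast_id] using hns
  -- trace relation
  have htr : ∀ n : ℕ, Algebra.trace (ZMod p) F (ω ^ (n + K))
      = c' * Algebra.trace (ZMod p) F (ω ^ n) := by
    intro n
    have h1 : ω ^ (n + K) = c' • ω ^ n := by
      rw [Algebra.smul_def, hc', hcdef, pow_add, mul_comm]
    rw [h1, map_smul, smul_eq_mul]
  have hlegmul : ∀ a b : ZMod p, legendreSym p (((a * b).val : ℤ)) =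
      legendreSym p ((a.val : ℤ)) * legendreSym p ((b.val : ℤ)) := by
    intro a b
    unfold legendreSym
    push_cast [ZMod.natCast_val, ZMod.cast_id]
    rw [map_mul]
  have hlegsh : ∀ n : ℕ, legendreSym p (((Algebra.trace (ZMod p) F (ω ^ (n + K))).val : ℤ))
      = - legendreSym p (((Algebra.trace (ZMod p) F (ω ^ n)).val : ℤ)) := by
    intro n
    rw [htr n, hlegmul, hlegc, neg_one_mul]
  have hrel : ∀ n : ℕ, ntuT2 p ω n = ntuT1 p ω (n + K) + 1 := by
    intro n
    unfold ntuT1 ntuT2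
    rw [hlegsh n]
    by_cases h : legendreSym p (((Algebra.trace (ZMod p) F (ω ^ n)).val : ℤ)) = 1
    · rw [if_pos h, if_pos (by rw [h]), ]; decide
    · rw [if_neg h, if_neg (by intro hh; exact h (by omega))]; decide
  have hper : ∀ n : ℕ, ntuT1 p ω (n + (K + K)) = ntuT1 p ω n := by
    intro n
    unfold ntuT1
    rw [show n + (K + K) = (n + K) + K by omega, hlegsh, hlegsh, neg_neg]
  -- arithmetic on N
  have hN2 : N = K + K := by
    rw [hN, Nat.mul_div_assoc 2 hKdvd]; omega
  have hNdiv : N / 2 = K := by omega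
  set J : Ideal (Polynomial (ZMod 2)) := Ideal.span {(X : Polynomial (ZMod 2)) ^ N - 1} with hJ
  rw [hT1x, hT2x, ← Ideal.mem_span_singleton, ← hJ, ← Ideal.Quotient.eq_zero_iff_mem]
  set y : Polynomial (ZMod 2) ⧸ J := Ideal.Quotient.mk J X with hy
  have hyN : y ^ N = 1 := by
    have h0 : Ideal.Quotient.mk J ((X : Polynomial (ZMod 2)) ^ N - 1) = 0 :=
      Ideal.Quotient.eq_zero_iff_mem.mpr (hJ ▸ Ideal.mem_span_singleton_self _)
    rw [map_sub, map_pow, map_one, sub_eq_zero] at h0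
    exact h0
  have hyKK : y ^ (K + K) = 1 := hN2 ▸ hyN
  simp only [map_sub, map_add, map_mul, map_pow, map_sum]
  rw [sub_eq_zero, hNdiv]
  have hmain : ∑ i ∈ Finset.range N,
        (Ideal.Quotient.mk J) (C (ntuT1 p ω (i + K))) * y ^ i
      = y ^ K * ∑ i ∈ Finset.range N,
        (Ideal.Quotient.mk J) (C (ntuT1 p ω i)) * y ^ i := by
    rw [Finset.mul_sum, hN2, Finset.sum_range_add, Finset.sum_range_add]
    have e1 : ∀ j ∈ Finset.range K,
        (Ideal.Quotient.mk J) (C (ntuT1 p ω (K + j + K))) * y ^ (K + j)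
          = y ^ K * ((Ideal.Quotient.mk J) (C (ntuT1 p ω j)) * y ^ j) := by
      intro j _
      rw [show K + j + K = j + (K + K) by omega, hper j, mul_left_comm, ← pow_add]
    have e2 : ∀ j ∈ Finset.range K,
        (Ideal.Quotient.mk J) (C (ntuT1 p ω (j + K))) * y ^ j
          = y ^ K * ((Ideal.Quotient.mk J) (C (ntuT1 p ω (K + j))) * y ^ (K + j)) := by
      intro j _
      rw [add_comm j K, mul_left_comm, ← pow_add,
        show K + (K + j) = (K + K) + j by omega, pow_add, hyKK, one_mul]
    rw [add_comm]
    exact congrArg₂ (· + ·) (Finset.sum_congr rfl e1) (Finset.sum_congr rfl e2)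
  have hstep : ∀ i ∈ Finset.range N,
      (Ideal.Quotient.mk J) (C (ntuT2 p ω i)) * y ^ i
        = (Ideal.Quotient.mk J) (C (ntuT1 p ω (i + K))) * y ^ i + y ^ i := by
    intro i _
    rw [hrel i, C_add, map_add, C_1, map_one, add_mul, one_mul]
  rw [Finset.sum_congr rfl hstep, Finset.sum_add_distrib, hmain]
end
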